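/- arXiv:2205.03193 — 4 statements merged into one kernel-verified Lean document; each statement's English description precedes it below -/
import Mathlib

section
/- Let A be a Hermitian d×d complex matrix. Define 𝒫(A) = {Var_ψ(A) : ψ ∈ ℂ^d a unit vector} and ℳ(A) = {Var_ρ(A) : ρ a density matrix on ℂ^d}. Then 𝒫(A) = ℳ(A) = conv(𝒫(A)), and this common set is exactly the closed interval [0, (λ_max(A) − λ_min(A))²/4]. -/
open Matrix
open scoped ComplexOrder

/-- Variance of the observable `A` in the (mixed) state `ρ`:
`Var_ρ(A) = Tr(A²ρ) − (Tr(Aρ))²`. -/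
noncomputable def varMix {d : ℕ} (A ρ : Matrix (Fin d) (Fin d) ℂ) : ℝ :=
  ((A * A * ρ).trace).re - (((A * ρ).trace).re) ^ 2

/-- Variance of the observable `A` in the pure state (unit vector) `ψ`:
`Var_ψ(A) = ⟨ψ, A²ψ⟩ − ⟨ψ, Aψ⟩²`. -/
noncomputable def varPure {d : ℕ} (A : Matrix (Fin d) (Fin d) ℂ)
    (ψ : EuclideanSpace ℂ (Fin d)) : ℝ :=
  ((star (fun i => ψ i) : Fin d → ℂ) ⬝ᵥ (A * A).mulVec (fun i => ψ i)).re
    - (((star (fun i => ψ i) : Fin d → ℂ) ⬝ᵥ A.mulVec (fun i => ψ i)).re) ^ 2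

/-!
Diagonalise `A = U diag(λ) U*`. A state `ρ` induces the probability vector
`p k = (U* ρ U) k k` on the eigenvalues, and `Var_ρ(A)` is the variance of `λ` under `p`;
conversely every probability vector `p` arises this way from the pure state `ψ = U √p`.
So pure and mixed states give the same set, the set of variances of `λ` under all
distributions. By Popoviciu's inequality it lies in `[0, (λ_max - λ_min)² / 4]`. The
two-point distributions `t δ_min + (1 - t) δ_max` have variance
`t (1 - t) (λ_max - λ_min)²`, which fills that interval as `t` runs over `[0, 1/2]`.
An interval is convex, so it equals its convex hull.
-/

noncomputable def weightedVariance {ι : Type*} [Fintype ι] (p x : ι → ℝ) : ℝ :=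
  ∑ i, p i * x i ^ 2 - (∑ i, p i * x i) ^ 2

namespace weightedVariance

variable {ι : Type*} [Fintype ι] {p : ι → ℝ}

theorem sum_mul_sub_sq (hp : p ∈ stdSimplex ℝ ι) (x : ι → ℝ) (c : ℝ) :
    ∑ i, p i * (x i - c) ^ 2 = weightedVariance p x + (∑ i, p i * x i - c) ^ 2 := by
  have h : ∀ i, p i * (x i - c) ^ 2 = p i * x i ^ 2 - 2 * c * (p i * x i) + c ^ 2 * p i :=
    fun i => by ring
  simp only [h, Finset.sum_add_distrib, Finset.sum_sub_distrib, ← Finset.mul_sum, hp.2,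
    weightedVariance]
  ring

theorem nonneg (hp : p ∈ stdSimplex ℝ ι) (x : ι → ℝ) : 0 ≤ weightedVariance p x := by
  have h := sum_mul_sub_sq hp x (∑ i, p i * x i)
  rw [sub_self, sq, mul_zero, add_zero] at h
  exact h ▸ Finset.sum_nonneg fun i _ => mul_nonneg (hp.1 i) (sq_nonneg _)

/-- Popoviciu's inequality. -/
theorem le_sq_sub_div_four (hp : p ∈ stdSimplex ℝ ι) {x : ι → ℝ} {a b : ℝ}
    (hx : ∀ i, x i ∈ Set.Icc a b) : weightedVariance p x ≤ (b - a) ^ 2 / 4 := by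
  -- compare with the spread about the midpoint, `(x - m)² = ((b - a) / 2)² - (x - a) (b - x)`
  have hspread : ∑ i, p i * (x i - (a + b) / 2) ^ 2 ≤ (b - a) ^ 2 / 4 := calc
    _ ≤ ∑ i, p i * ((b - a) ^ 2 / 4) :=
      Finset.sum_le_sum fun i _ => mul_le_mul_of_nonneg_left
        (by nlinarith [mul_nonneg (sub_nonneg.2 (hx i).1) (sub_nonneg.2 (hx i).2)]) (hp.1 i)
    _ = (b - a) ^ 2 / 4 := by rw [← Finset.sum_mul, hp.2, one_mul]
  rw [sum_mul_sub_sq hp] at hspread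
  nlinarith [sq_nonneg (∑ i, p i * x i - (a + b) / 2)]

theorem two_point [DecidableEq ι] (x : ι → ℝ) (i j : ι) (t : ℝ) :
    weightedVariance (t • Pi.single i 1 + (1 - t) • Pi.single j 1) x
      = t * (1 - t) * (x i - x j) ^ 2 := by
  simp only [weightedVariance, Pi.add_apply, Pi.smul_apply, Pi.single_apply, smul_eq_mul,
    mul_ite, mul_one, mul_zero, add_mul, ite_mul, zero_mul, Finset.sum_add_distrib,
    Finset.sum_ite_eq', Finset.mem_univ, if_true]
  ring

theorem image_stdSimplex [DecidableEq ι] {x : ι → ℝ} {a b : ℝ}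
    (ha : IsLeast (Set.range x) a) (hb : IsGreatest (Set.range x) b) :
    (weightedVariance · x) '' stdSimplex ℝ ι = Set.Icc 0 ((b - a) ^ 2 / 4) := by
  refine subset_antisymm ?_ fun v hv => ?_
  · rintro _ ⟨p, hp, rfl⟩
    exact ⟨nonneg hp x, le_sq_sub_div_four hp fun i => ⟨ha.2 ⟨i, rfl⟩, hb.2 ⟨i, rfl⟩⟩⟩
  obtain ⟨⟨i, rfl⟩, ⟨j, rfl⟩⟩ := And.intro ha.1 hb.1
  have hcont : ContinuousOn (fun t : ℝ => t * (1 - t) * (x i - x j) ^ 2)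
      (Set.Icc 0 (1 / 2)) := by
    fun_prop
  have hends : v ∈ Set.Icc (0 * (1 - 0) * (x i - x j) ^ 2)
      (1 / 2 * (1 - 1 / 2) * (x i - x j) ^ 2) := by
    convert hv using 2 <;> ring
  obtain ⟨t, ht, hvt⟩ := intermediate_value_Icc (by norm_num) hcont hends
  exact ⟨t • Pi.single i 1 + (1 - t) • Pi.single j 1,
    convex_stdSimplex ℝ ι (single_mem_stdSimplex ℝ i) (single_mem_stdSimplex ℝ j)
      ht.1 (by linarith [ht.2]) (by ring), (two_point x i j t).trans hvt⟩

end weightedVariance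

theorem Matrix.trace_mul_diagonal_mul_mul {n R : Type*} [Fintype n] [DecidableEq n]
    [CommSemiring R] (U V ρ : Matrix n n R) (f : n → R) :
    (U * diagonal f * V * ρ).trace = ∑ k, f k * (V * ρ * U) k k := by
  rw [Matrix.mul_assoc, Matrix.mul_assoc, trace_mul_comm, Matrix.mul_assoc]
  simp [trace, diagonal_mul]

theorem EuclideanSpace.trace_vecMulVec_self_star {n 𝕜 : Type*} [Fintype n] [RCLike 𝕜]
    (ψ : EuclideanSpace 𝕜 n) : (vecMulVec ψ.ofLp (star ψ.ofLp)).trace = (‖ψ‖ ^ 2 : 𝕜) := by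
  rw [trace_vecMulVec, ← EuclideanSpace.inner_eq_star_dotProduct, inner_self_eq_norm_sq_to_K]

namespace Matrix.IsHermitian

variable {n 𝕜 : Type*} [Fintype n] [DecidableEq n] [RCLike 𝕜] {A : Matrix n n 𝕜}

theorem setOf_ofReal_mem_spectrum (hA : A.IsHermitian) :
    {x : ℝ | (x : 𝕜) ∈ spectrum 𝕜 A} = Set.range hA.eigenvalues := by
  ext x
  simp [hA.spectrum_eq_image_range]

theorem eq_conj_diagonal (hA : A.IsHermitian) :
    A = (hA.eigenvectorUnitary : Matrix n n 𝕜) * diagonal (RCLike.ofReal ∘ hA.eigenvalues)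
      * star (hA.eigenvectorUnitary : Matrix n n 𝕜) := by
  conv_lhs => rw [hA.spectral_theorem, Unitary.conjStarAlgAut_apply]

theorem mul_self_eq_conj_diagonal (hA : A.IsHermitian) :
    A * A = (hA.eigenvectorUnitary : Matrix n n 𝕜)
      * diagonal (RCLike.ofReal ∘ (hA.eigenvalues ^ 2))
      * star (hA.eigenvectorUnitary : Matrix n n 𝕜) := by
  set U : Matrix n n 𝕜 := ↑hA.eigenvectorUnitary
  have hU : star U * U = 1 := Unitary.star_mul_self_of_mem hA.eigenvectorUnitary.2
  have hD : (diagonal (RCLike.ofReal ∘ (hA.eigenvalues ^ 2)) : Matrix n n 𝕜) =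
      diagonal (RCLike.ofReal ∘ hA.eigenvalues) * diagonal (RCLike.ofReal ∘ hA.eigenvalues) := by
    rw [diagonal_mul_diagonal]
    congr 1
    ext k
    simp [sq]
  conv_lhs => rw [hA.eq_conj_diagonal]
  rw [hD]
  simp only [Matrix.mul_assoc]
  rw [← Matrix.mul_assoc (star U) U, hU, Matrix.one_mul]

/-- The distribution of the outcome of measuring `A` in the state `ρ`, read off in the
eigenbasis of `A`. -/
noncomputable def eigenWeights (hA : A.IsHermitian) (ρ : Matrix n n 𝕜) : n → ℝ := fun k =>
  RCLike.re ((star (hA.eigenvectorUnitary : Matrix n n 𝕜) * ρ * hA.eigenvectorUnitary) k k)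

theorem re_trace_conj_diagonal_mul (hA : A.IsHermitian) (ρ : Matrix n n 𝕜) (g : n → ℝ) :
    RCLike.re ((hA.eigenvectorUnitary : Matrix n n 𝕜) * diagonal (RCLike.ofReal ∘ g)
      * star (hA.eigenvectorUnitary : Matrix n n 𝕜) * ρ).trace
      = ∑ k, g k * hA.eigenWeights ρ k := by
  simp [trace_mul_diagonal_mul_mul, eigenWeights]

theorem sum_eigenWeights (hA : A.IsHermitian) (ρ : Matrix n n 𝕜) :
    ∑ k, hA.eigenWeights ρ k = RCLike.re ρ.trace := by
  calc ∑ k, hA.eigenWeights ρ k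
      = RCLike.re (star (hA.eigenvectorUnitary : Matrix n n 𝕜) * ρ
          * hA.eigenvectorUnitary).trace := (map_sum RCLike.re _ _).symm
    _ = RCLike.re ρ.trace := by
      rw [trace_mul_cycle, Unitary.mul_star_self_of_mem hA.eigenvectorUnitary.2, Matrix.one_mul]

theorem eigenWeights_mem_stdSimplex (hA : A.IsHermitian) {ρ : Matrix n n 𝕜} (hρ : ρ.PosSemidef)
    (htr : ρ.trace = 1) : hA.eigenWeights ρ ∈ stdSimplex ℝ n :=
  ⟨fun k => RCLike.nonneg_iff.1 ((hρ.conjTranspose_mul_mul_same _).diag_nonneg) |>.1,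
    by rw [sum_eigenWeights, htr, RCLike.one_re]⟩

theorem eigenWeights_vecMulVec_mulVec (hA : A.IsHermitian) (c : n → 𝕜) :
    hA.eigenWeights (vecMulVec ((hA.eigenvectorUnitary : Matrix n n 𝕜) *ᵥ c)
      (star ((hA.eigenvectorUnitary : Matrix n n 𝕜) *ᵥ c))) = fun k => ‖c k‖ ^ 2 := by
  have hU : star (hA.eigenvectorUnitary : Matrix n n 𝕜) * hA.eigenvectorUnitary = 1 :=
    Unitary.star_mul_self_of_mem hA.eigenvectorUnitary.2
  ext k
  rw [eigenWeights, mul_vecMulVec, vecMulVec_mul, star_mulVec, vecMul_vecMul, mulVec_mulVec,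
    ← star_eq_conjTranspose, hU, one_mulVec, vecMul_one, vecMulVec_apply, Pi.star_apply,
    RCLike.star_def, RCLike.mul_conj, ← RCLike.ofReal_pow, RCLike.ofReal_re]

theorem exists_eigenWeights_eq (hA : A.IsHermitian) {p : n → ℝ} (hp : p ∈ stdSimplex ℝ n) :
    ∃ ψ : EuclideanSpace 𝕜 n, ‖ψ‖ = 1 ∧
      hA.eigenWeights (vecMulVec ψ.ofLp (star ψ.ofLp)) = p := by
  set ψ : EuclideanSpace 𝕜 n :=
    WithLp.toLp 2 ((hA.eigenvectorUnitary : Matrix n n 𝕜) *ᵥ fun k => (√(p k) : 𝕜))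
  have hw : hA.eigenWeights (vecMulVec ψ.ofLp (star ψ.ofLp)) = p := by
    rw [eigenWeights_vecMulVec_mulVec]
    ext k
    rw [RCLike.norm_ofReal, sq_abs, Real.sq_sqrt (hp.1 k)]
  refine ⟨ψ, ?_, hw⟩
  have h := hA.sum_eigenWeights (vecMulVec ψ.ofLp (star ψ.ofLp))
  rw [hw, hp.2, EuclideanSpace.trace_vecMulVec_self_star, ← RCLike.ofReal_pow,
    RCLike.ofReal_re] at h
  exact (pow_eq_one_iff_of_nonneg (norm_nonneg ψ) two_ne_zero).1 h.symm

end Matrix.IsHermitian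

section Variances

variable {d : ℕ}

def pureVariances (A : Matrix (Fin d) (Fin d) ℂ) : Set ℝ :=
  {v | ∃ ψ : EuclideanSpace ℂ (Fin d), ‖ψ‖ = 1 ∧ v = varPure A ψ}

def mixedVariances (A : Matrix (Fin d) (Fin d) ℂ) : Set ℝ :=
  {v | ∃ ρ : Matrix (Fin d) (Fin d) ℂ, ρ.PosSemidef ∧ ρ.trace = 1 ∧ v = varMix A ρ}

theorem varPure_eq_varMix_vecMulVec (A : Matrix (Fin d) (Fin d) ℂ)
    (ψ : EuclideanSpace ℂ (Fin d)) :
    varPure A ψ = varMix A (vecMulVec ψ.ofLp (star ψ.ofLp)) := by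
  simp only [varPure, varMix, mul_vecMulVec, trace_vecMulVec, dotProduct_comm _ (star ψ.ofLp)]

theorem varMix_eq_weightedVariance {A : Matrix (Fin d) (Fin d) ℂ} (hA : A.IsHermitian)
    (ρ : Matrix (Fin d) (Fin d) ℂ) :
    varMix A ρ = weightedVariance (hA.eigenWeights ρ) hA.eigenvalues := by
  have h1 := hA.re_trace_conj_diagonal_mul ρ hA.eigenvalues
  have h2 := hA.re_trace_conj_diagonal_mul ρ (hA.eigenvalues ^ 2)
  rw [← hA.eq_conj_diagonal] at h1
  rw [← hA.mul_self_eq_conj_diagonal] at h2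
  simp only [varMix, weightedVariance, Pi.pow_apply] at h1 h2 ⊢
  rw [← RCLike.re_eq_complex_re, h1, h2]
  simp only [mul_comm]

theorem pureVariances_subset_mixedVariances (A : Matrix (Fin d) (Fin d) ℂ) :
    pureVariances A ⊆ mixedVariances A := by
  rintro _ ⟨ψ, hψ, rfl⟩
  refine ⟨_, posSemidef_vecMulVec_self_star ψ.ofLp, ?_, varPure_eq_varMix_vecMulVec A ψ⟩
  rw [EuclideanSpace.trace_vecMulVec_self_star, hψ, RCLike.ofReal_one, one_pow]

theorem mixedVariances_subset_image_stdSimplex {A : Matrix (Fin d) (Fin d) ℂ}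
    (hA : A.IsHermitian) :
    mixedVariances A ⊆ (weightedVariance · hA.eigenvalues) '' stdSimplex ℝ (Fin d) := by
  rintro _ ⟨ρ, hρ, htr, rfl⟩
  exact ⟨_, hA.eigenWeights_mem_stdSimplex hρ htr, (varMix_eq_weightedVariance hA ρ).symm⟩

theorem image_stdSimplex_subset_pureVariances {A : Matrix (Fin d) (Fin d) ℂ}
    (hA : A.IsHermitian) :
    (weightedVariance · hA.eigenvalues) '' stdSimplex ℝ (Fin d) ⊆ pureVariances A := by
  rintro _ ⟨p, hp, rfl⟩
  obtain ⟨ψ, hψ, hw⟩ := hA.exists_eigenWeights_eq hp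
  exact ⟨ψ, hψ, by rw [varPure_eq_varMix_vecMulVec, varMix_eq_weightedVariance hA, hw]⟩

end Variances

theorem stmt_2_general (d : ℕ) (A : Matrix (Fin d) (Fin d) ℂ) (hA : A.IsHermitian)
    (lmin lmax : ℝ)
    (hmin : IsLeast {x : ℝ | (x : ℂ) ∈ spectrum ℂ A} lmin)
    (hmax : IsGreatest {x : ℝ | (x : ℂ) ∈ spectrum ℂ A} lmax) :
    {v : ℝ | ∃ ψ : EuclideanSpace ℂ (Fin d), ‖ψ‖ = 1 ∧ v = varPure A ψ}
        = {v : ℝ | ∃ ρ : Matrix (Fin d) (Fin d) ℂ,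
            ρ.PosSemidef ∧ ρ.trace = 1 ∧ v = varMix A ρ} ∧
    {v : ℝ | ∃ ψ : EuclideanSpace ℂ (Fin d), ‖ψ‖ = 1 ∧ v = varPure A ψ}
        = convexHull ℝ {v : ℝ | ∃ ψ : EuclideanSpace ℂ (Fin d), ‖ψ‖ = 1 ∧ v = varPure A ψ} ∧
    {v : ℝ | ∃ ψ : EuclideanSpace ℂ (Fin d), ‖ψ‖ = 1 ∧ v = varPure A ψ}
        = Set.Icc 0 ((lmax - lmin) ^ 2 / 4) := by
  change pureVariances A = mixedVariances A ∧ pureVariances A = convexHull ℝ (pureVariances A) ∧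
    pureVariances A = Set.Icc 0 ((lmax - lmin) ^ 2 / 4)
  have hspec : {x : ℝ | (x : ℂ) ∈ spectrum ℂ A} = Set.range hA.eigenvalues :=
    hA.setOf_ofReal_mem_spectrum
  rw [hspec] at hmin hmax
  have hV := weightedVariance.image_stdSimplex hmin hmax
  have hPM := pureVariances_subset_mixedVariances A
  have hMV := mixedVariances_subset_image_stdSimplex hA
  have hVP := image_stdSimplex_subset_pureVariances hA
  have hP : pureVariances A = Set.Icc 0 ((lmax - lmin) ^ 2 / 4) :=
    hV ▸ (hPM.trans hMV).antisymm hVP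
  refine ⟨hPM.antisymm (hMV.trans hVP), ?_, hP⟩
  rw [hP, (convex_Icc _ _).convexHull_eq]

/-- For a Hermitian `d×d` matrix `A`, the set `𝒫(A)` of pure-state variances,
the set `ℳ(A)` of mixed-state variances, and the convex hull of `𝒫(A)` all coincide, and
equal the closed interval `[0, (λ_max(A) − λ_min(A))²/4]`. -/
theorem stmt_2 (d : ℕ) (hd : 0 < d) (A : Matrix (Fin d) (Fin d) ℂ) (hA : A.IsHermitian)
    (lmin lmax : ℝ)
    (hmin : IsLeast {x : ℝ | (x : ℂ) ∈ spectrum ℂ A} lmin)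
    (hmax : IsGreatest {x : ℝ | (x : ℂ) ∈ spectrum ℂ A} lmax) :
    {v : ℝ | ∃ ψ : EuclideanSpace ℂ (Fin d), ‖ψ‖ = 1 ∧ v = varPure A ψ}
        = {v : ℝ | ∃ ρ : Matrix (Fin d) (Fin d) ℂ,
            ρ.PosSemidef ∧ ρ.trace = 1 ∧ v = varMix A ρ} ∧
    {v : ℝ | ∃ ψ : EuclideanSpace ℂ (Fin d), ‖ψ‖ = 1 ∧ v = varPure A ψ}
        = convexHull ℝ {v : ℝ | ∃ ψ : EuclideanSpace ℂ (Fin d), ‖ψ‖ = 1 ∧ v = varPure A ψ} ∧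
    {v : ℝ | ∃ ψ : EuclideanSpace ℂ (Fin d), ‖ψ‖ = 1 ∧ v = varPure A ψ}
        = Set.Icc 0 ((lmax - lmin) ^ 2 / 4) :=
  stmt_2_general d A hA lmin lmax hmin hmax
end

section
/- Let d ≥ 2, let λ₁, …, λ_d be pairwise distinct real numbers, and let s be a nonzero real number. Then ∫_{T_{d−1}} exp(−s(λ_d + Σ_{i=1}^{d−1}(λ_i − λ_d)x_i)) dx = Σ_{i=1}^d exp(−λ_i s) / ((−s)^{d−1} ∏_{j ≠ i}(λ_i − λ_j)), where T_{d−1} = {x ∈ ℝ^{d−1} : x_i ≥ 0 for all i, Σ_{i=1}^{d−1} x_i ≤ 1} and the integral is with respect to (d−1)-dimensional Lebesgue measure. (Equivalently: the Laplace transform of the uniform distribution of Σ_i λ_i r_i over the probability simplex equals this sum of exponentials.) -/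
/-!
Integrating out the last coordinate `t ∈ [0, 1 - ∑ y]` of the corner simplex is an integral of an
exponential in `t`: for nodes `(μ, a, b)` it gives `-s (a - b) I(μ, a, b) = I(μ, a) - I(μ, b)`.
This is the recurrence of divided differences, so `(-s)^(d-1) I(λ)` is the divided difference
of `x ↦ exp (-x s)` at the nodes `λ`, and the right-hand side is its closed form.
-/

open MeasureTheory Finset

section DividedDifference

variable {K : Type*} [Field K] [DecidableEq K] (f : K → K)

def divDiff (S : Finset K) : K := ∑ i ∈ S, f i / ∏ j ∈ S.erase i, (i - j)

theorem divDiff_insert {a : K} {S : Finset K} (ha : a ∉ S) :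
    divDiff f (insert a S) =
      f a / ∏ j ∈ S, (a - j) + ∑ i ∈ S, f i / ((i - a) * ∏ j ∈ S.erase i, (i - j)) := by
  rw [divDiff, sum_insert ha, erase_insert ha]
  congr 1
  refine sum_congr rfl fun i hi => ?_
  have hia : i ≠ a := ne_of_mem_of_not_mem hi ha
  rw [erase_insert_of_ne hia.symm, prod_insert fun h => ha (mem_of_mem_erase h)]

theorem sub_mul_divDiff_insert_insert {p q : K} {S : Finset K} (hpq : p ≠ q) (hp : p ∉ S)
    (hq : q ∉ S) :
    (p - q) * divDiff f (insert p (insert q S)) =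
      divDiff f (insert p S) - divDiff f (insert q S) := by
  have hpq' : p - q ≠ 0 := sub_ne_zero.mpr hpq
  have hp' : p ∉ insert q S := by simp [hpq, hp]
  rw [divDiff_insert f hp', divDiff_insert f hp, divDiff_insert f hq, sum_insert hq,
    prod_insert hq, erase_insert hq]
  have hS : ∀ i ∈ S, (p - q) * (f i / ((i - p) * ∏ j ∈ (insert q S).erase i, (i - j))) =
      f i / ((i - p) * ∏ j ∈ S.erase i, (i - j)) - f i / ((i - q) * ∏ j ∈ S.erase i, (i - j)) := by
    intro i hi
    have hip : i - p ≠ 0 := sub_ne_zero.mpr (ne_of_mem_of_not_mem hi hp)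
    have hiq : i - q ≠ 0 := sub_ne_zero.mpr (ne_of_mem_of_not_mem hi hq)
    have hP : ∏ j ∈ S.erase i, (i - j) ≠ 0 :=
      prod_ne_zero_iff.mpr fun j hj => sub_ne_zero.mpr (ne_of_mem_erase hj).symm
    rw [erase_insert_of_ne (sub_ne_zero.mp hiq).symm,
      prod_insert fun h => hq (mem_of_mem_erase h)]
    field_simp
    ring
  have hp_term : (p - q) * (f p / ((p - q) * ∏ j ∈ S, (p - j))) = f p / ∏ j ∈ S, (p - j) := by
    rw [mul_div_assoc', mul_div_mul_left _ _ hpq']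
  have hq_term : (p - q) * (f q / ((q - p) * ∏ j ∈ S, (q - j))) = -(f q / ∏ j ∈ S, (q - j)) := by
    rw [← neg_sub, neg_mul, mul_div_assoc', mul_div_mul_left _ _ (sub_ne_zero.mpr hpq.symm)]
  rw [mul_add, mul_add, mul_sum, sum_congr rfl hS, sum_sub_distrib, hp_term, hq_term]
  ring

theorem divDiff_image {m : ℕ} {lam : Fin m → K} (hlam : Function.Injective lam) :
    divDiff f (univ.image lam) = ∑ i, f (lam i) / ∏ j ∈ univ.erase i, (lam i - lam j) := by
  rw [divDiff, sum_image hlam.injOn]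
  refine sum_congr rfl fun i _ => ?_
  rw [← image_erase hlam, prod_image hlam.injOn]

end DividedDifference

theorem Fin.image_snoc_univ {α : Type*} [DecidableEq α] {k : ℕ} (μ : Fin k → α) (a : α) :
    univ.image (Fin.snoc μ a : Fin (k + 1) → α) = insert a (univ.image μ) := by
  rw [← coe_inj]; simp

def cornerSimplex (m : ℕ) : Set (Fin m → ℝ) := {x | (∀ i, 0 ≤ x i) ∧ (∑ i, x i) ≤ 1}

theorem isClosed_cornerSimplex (m : ℕ) : IsClosed (cornerSimplex m) := by
  simp only [cornerSimplex, Set.ofPred_and, Set.ofPred_forall]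
  exact (isClosed_iInter fun i => isClosed_le continuous_const (continuous_apply i)).inter
    (isClosed_le (continuous_finsetSum _ fun i _ => continuous_apply i) continuous_const)

theorem isCompact_cornerSimplex (m : ℕ) : IsCompact (cornerSimplex m) := by
  refine (isCompact_univ_pi fun _ => isCompact_Icc (a := (0 : ℝ)) (b := 1)).of_isClosed_subset
    (isClosed_cornerSimplex m) fun x hx i _ => ⟨hx.1 i, ?_⟩
  exact (single_le_sum (fun j _ => hx.1 j) (mem_univ i)).trans hx.2

theorem Fin.snoc_mem_cornerSimplex_iff {k : ℕ} (y : Fin k → ℝ) (t : ℝ) :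
    Fin.snoc y t ∈ cornerSimplex (k + 1) ↔ y ∈ cornerSimplex k ∧ t ∈ Set.Icc 0 (1 - ∑ i, y i) := by
  simp only [cornerSimplex, Set.mem_ofPred_eq, Fin.forall_fin_succ', Fin.sum_univ_castSucc,
    Fin.snoc_castSucc, Fin.snoc_last, Set.mem_Icc]
  constructor
  · rintro ⟨⟨hy, ht⟩, hsum⟩
    exact ⟨⟨hy, by linarith⟩, ht, by linarith⟩
  · rintro ⟨⟨hy, -⟩, ht, hsum⟩
    exact ⟨⟨hy, ht⟩, by linarith⟩

theorem setIntegral_cornerSimplex_succ {E : Type*} [NormedAddCommGroup E] [NormedSpace ℝ E]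
    {k : ℕ} {f : (Fin (k + 1) → ℝ) → E} (hf : IntegrableOn f (cornerSimplex (k + 1))) :
    ∫ x in cornerSimplex (k + 1), f x =
      ∫ y in cornerSimplex k, ∫ t in (0 : ℝ)..1 - ∑ i, y i, f (Fin.snoc y t) := by
  set g := (cornerSimplex (k + 1)).indicator f
  have hsnoc := (volume_preserving_piFinSuccAbove (fun _ : Fin (k + 1) => ℝ) (Fin.last k)).symm
  have hsymm : ⇑(MeasurableEquiv.piFinSuccAbove (fun _ : Fin (k + 1) => ℝ) (Fin.last k)).symm =
      fun z => Fin.snoc z.2 z.1 := by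
    ext z; simp [MeasurableEquiv.piFinSuccAbove_symm_apply, Fin.snocEquiv]
  rw [Measure.volume_eq_prod] at hsnoc
  have hg : ∀ y t, g (Fin.snoc y t) = (cornerSimplex k).indicator
      (fun y => (Set.Icc 0 (1 - ∑ i, y i)).indicator (fun t => f (Fin.snoc y t)) t) y := by
    classical
    intro y t
    simp only [g, Set.indicator_apply, Fin.snoc_mem_cornerSimplex_iff, ite_and]
  have hfiber : ∀ y, ∫ t, g (Fin.snoc y t) = (cornerSimplex k).indicator
      (fun y => ∫ t in (0 : ℝ)..1 - ∑ i, y i, f (Fin.snoc y t)) y := by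
    intro y
    by_cases hy : y ∈ cornerSimplex k
    · have hu : (0 : ℝ) ≤ 1 - ∑ i, y i := by linarith [hy.2]
      simp only [hg, Set.indicator_of_mem hy]
      rw [integral_indicator measurableSet_Icc, integral_Icc_eq_integral_Ioc,
        intervalIntegral.integral_of_le hu]
    · simp only [hg, Set.indicator_of_notMem hy, integral_zero]
  have hmeas := (isClosed_cornerSimplex (k + 1)).measurableSet
  calc ∫ x in cornerSimplex (k + 1), f x
      = ∫ z : ℝ × (Fin k → ℝ), g (Fin.snoc z.2 z.1) ∂(volume.prod volume) := by
        rw [← integral_indicator hmeas, ← hsnoc.integral_comp', hsymm]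
    _ = ∫ y, ∫ t, g (Fin.snoc y t) := by
        refine integral_prod_symm _ ?_
        have := (hsnoc.integrable_comp_emb (MeasurableEquiv.measurableEmbedding _)).mpr
          (hf.integrable_indicator hmeas)
        rwa [hsymm] at this
    _ = ∫ y in cornerSimplex k, ∫ t in (0 : ℝ)..1 - ∑ i, y i, f (Fin.snoc y t) := by
        simp only [hfiber]
        exact integral_indicator (isClosed_cornerSimplex k).measurableSet

theorem mul_integral_exp_add_mul (c β u : ℝ) :
    β * ∫ t in (0 : ℝ)..u, Real.exp (c + β * t) = Real.exp (c + β * u) - Real.exp c := by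
  rw [intervalIntegral.mul_integral_comp_add_mul, integral_exp, mul_zero, add_zero]

/-- `∑ᵢ λᵢ rᵢ` at the point `r = (x, 1 - ∑ x)` of the probability simplex. -/
def simplexMean {m : ℕ} (lam : Fin (m + 1) → ℝ) (x : Fin m → ℝ) : ℝ :=
  lam (Fin.last m) + ∑ i, (lam i.castSucc - lam (Fin.last m)) * x i

theorem simplexMean_snoc_snoc {k : ℕ} (μ : Fin k → ℝ) (a b : ℝ) (y : Fin k → ℝ) (t : ℝ) :
    simplexMean (Fin.snoc (Fin.snoc μ a) b) (Fin.snoc y t) =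
      simplexMean (Fin.snoc μ b) y + (a - b) * t := by
  simp only [simplexMean, Fin.sum_univ_castSucc (n := k), Fin.snoc_castSucc, Fin.snoc_last]
  ring

theorem simplexMean_snoc_add {k : ℕ} (μ : Fin k → ℝ) (a b : ℝ) (y : Fin k → ℝ) :
    simplexMean (Fin.snoc μ b) y + (a - b) * (1 - ∑ i, y i) = simplexMean (Fin.snoc μ a) y := by
  simp only [simplexMean, Fin.snoc_castSucc, Fin.snoc_last, sub_mul, sum_sub_distrib, ← mul_sum]
  ring

noncomputable def simplexLaplace (s : ℝ) {m : ℕ} (lam : Fin (m + 1) → ℝ) : ℝ :=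
  ∫ x in cornerSimplex m, Real.exp (-s * simplexMean lam x)

theorem integrableOn_exp_simplexMean (s : ℝ) {m : ℕ} (lam : Fin (m + 1) → ℝ) :
    IntegrableOn (fun x => Real.exp (-s * simplexMean lam x)) (cornerSimplex m) := by
  refine ContinuousOn.integrableOn_compact (isCompact_cornerSimplex m) (Continuous.continuousOn ?_)
  unfold simplexMean
  fun_prop

theorem simplexLaplace_fin_one (s : ℝ) (lam : Fin 1 → ℝ) :
    simplexLaplace s lam = Real.exp (-s * lam 0) := by
  have huniv : cornerSimplex 0 = Set.univ := by simp [cornerSimplex]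
  simp [simplexLaplace, simplexMean, huniv, Measure.real, volume_pi]

theorem mul_simplexLaplace_snoc_snoc (s : ℝ) {k : ℕ} (μ : Fin k → ℝ) (a b : ℝ) :
    -s * (a - b) * simplexLaplace s (Fin.snoc (Fin.snoc μ a) b) =
      simplexLaplace s (Fin.snoc μ a) - simplexLaplace s (Fin.snoc μ b) := by
  rw [simplexLaplace, setIntegral_cornerSimplex_succ (integrableOn_exp_simplexMean s _),
    ← integral_const_mul, simplexLaplace, simplexLaplace,
    ← integral_sub (integrableOn_exp_simplexMean s _) (integrableOn_exp_simplexMean s _)]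
  refine setIntegral_congr_fun (isClosed_cornerSimplex k).measurableSet fun y _ => ?_
  simp only [simplexMean_snoc_snoc, mul_add, ← mul_assoc]
  rw [mul_integral_exp_add_mul, ← simplexMean_snoc_add μ a b, mul_add, ← mul_assoc]

theorem pow_mul_simplexLaplace (s : ℝ) {m : ℕ} {lam : Fin (m + 1) → ℝ}
    (hlam : Function.Injective lam) :
    (-s) ^ m * simplexLaplace s lam = divDiff (fun x => Real.exp (-x * s)) (univ.image lam) := by
  induction m with
  | zero =>
    simp [simplexLaplace_fin_one, divDiff, mul_comm]
  | succ k ih =>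
    obtain ⟨ν, b, rfl⟩ : ∃ ν b, lam = Fin.snoc ν b := ⟨_, _, (Fin.snoc_init_self lam).symm⟩
    obtain ⟨μ, a, rfl⟩ : ∃ μ a, ν = Fin.snoc μ a := ⟨_, _, (Fin.snoc_init_self ν).symm⟩
    obtain ⟨hν, hb⟩ := Fin.snoc_injective_iff.mp hlam
    obtain ⟨hμ, ha⟩ := Fin.snoc_injective_iff.mp hν
    rw [Fin.range_snoc, Set.mem_insert_iff, not_or] at hb
    obtain ⟨hba, hb⟩ := hb
    have hab : a - b ≠ 0 := sub_ne_zero.mpr (Ne.symm hba)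
    have ha' : a ∉ univ.image μ := by simpa using ha
    have hb' : b ∉ univ.image μ := by simpa using hb
    refine mul_left_cancel₀ hab ?_
    calc (a - b) * ((-s) ^ (k + 1) * simplexLaplace s (Fin.snoc (Fin.snoc μ a) b))
        = (-s) ^ k * (-s * (a - b) * simplexLaplace s (Fin.snoc (Fin.snoc μ a) b)) := by ring
      _ = (-s) ^ k * simplexLaplace s (Fin.snoc μ a) -
          (-s) ^ k * simplexLaplace s (Fin.snoc μ b) := by
        rw [mul_simplexLaplace_snoc_snoc, mul_sub]
      _ = _ := by
        rw [ih (Fin.snoc_injective_of_injective hμ ha), ih (Fin.snoc_injective_of_injective hμ hb)]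
        simp only [Fin.image_snoc_univ]
        rw [insert_comm, sub_mul_divDiff_insert_insert _ (Ne.symm hba) ha' hb']

theorem stmt_5_general (n : ℕ) (lam : Fin (n + 1) → ℝ)
    (hlam : Function.Injective lam) (s : ℝ) (hs : s ≠ 0) :
    (∫ x in {x : Fin n → ℝ | (∀ i, 0 ≤ x i) ∧ (∑ i, x i) ≤ 1},
        Real.exp (-s * (lam (Fin.last n)
          + ∑ i : Fin n, (lam i.castSucc - lam (Fin.last n)) * x i)))
      = ∑ i : Fin (n + 1), Real.exp (-(lam i) * s)
          / ((-s) ^ n * ∏ j ∈ Finset.univ.erase i, (lam i - lam j)) := by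
  have hpow : (-s) ^ n ≠ 0 := pow_ne_zero n (neg_ne_zero.mpr hs)
  have key := pow_mul_simplexLaplace s hlam
  rw [divDiff_image _ hlam] at key
  simp_rw [mul_comm ((-s) ^ n), ← div_div, ← sum_div, ← key, mul_div_cancel_left₀ _ hpow]
  rfl

/-- For `d = n + 1 ≥ 2`, pairwise distinct reals `λ₁, …, λ_d` and `s ≠ 0`,
the Laplace transform of the uniform distribution of `Σᵢ λᵢ rᵢ` over the probability simplex,
written as an integral over the corner simplex `T_{d−1} ⊆ ℝ^{d−1}`, equals
`Σᵢ exp(−λᵢ s) / ((−s)^{d−1} ∏_{j≠i} (λᵢ − λⱼ))`. -/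
theorem stmt_5 (n : ℕ) (hn : 1 ≤ n) (lam : Fin (n + 1) → ℝ)
    (hlam : Function.Injective lam) (s : ℝ) (hs : s ≠ 0) :
    (∫ x in {x : Fin n → ℝ | (∀ i, 0 ≤ x i) ∧ (∑ i, x i) ≤ 1},
        Real.exp (-s * (lam (Fin.last n)
          + ∑ i : Fin n, (lam i.castSucc - lam (Fin.last n)) * x i)))
      = ∑ i : Fin (n + 1), Real.exp (-(lam i) * s)
          / ((-s) ^ n * ∏ j ∈ Finset.univ.erase i, (lam i - lam j)) :=
  stmt_5_general n lam hlam s hs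
end

section
/- Let A = a₀·I + a·σ and B = b₀·I + b·σ be qubit observables whose Bloch vectors a, b ∈ ℝ³ are linearly independent, and let T_{a,b} be the 2×2 Gram matrix of (a,b). Then for every unit vector ψ ∈ ℂ², (⟨A⟩_ψ − a₀, ⟨B⟩_ψ − b₀) T_{a,b}^{-1} (⟨A⟩_ψ − a₀, ⟨B⟩_ψ − b₀)ᵀ ≤ 1; that is, the pair of expectation values always lies in the closed ellipse {(r,s) : ω_{A,B}(r,s) ≤ 1}. -/
open Matrix MeasureTheory
open scoped ComplexOrder

/-- The Pauli matrix `σ₁`. -/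
noncomputable def sigma1 : Matrix (Fin 2) (Fin 2) ℂ := !![0, 1; 1, 0]

/-- The Pauli matrix `σ₂`. -/
noncomputable def sigma2 : Matrix (Fin 2) (Fin 2) ℂ := !![0, -Complex.I; Complex.I, 0]

/-- The Pauli matrix `σ₃`. -/
noncomputable def sigma3 : Matrix (Fin 2) (Fin 2) ℂ := !![1, 0; 0, -1]

/-- The qubit observable `A = a₀·I + a·σ` with Bloch vector `a ∈ ℝ³`. -/
noncomputable def qubitObs (a₀ : ℝ) (a : EuclideanSpace ℝ (Fin 3)) :
    Matrix (Fin 2) (Fin 2) ℂ :=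
  a₀ • (1 : Matrix (Fin 2) (Fin 2) ℂ) + a 0 • sigma1 + a 1 • sigma2 + a 2 • sigma3

/-- Expectation value `⟨A⟩_ψ = ⟨ψ, Aψ⟩` of the observable `A` in the pure state `ψ`. -/
noncomputable def expVal (A : Matrix (Fin 2) (Fin 2) ℂ) (ψ : EuclideanSpace ℂ (Fin 2)) : ℝ :=
  ((star (fun i => ψ i) : Fin 2 → ℂ) ⬝ᵥ A.mulVec (fun i => ψ i)).re

/-- Standard deviation `Δ_ψ A = √(⟨ψ,A²ψ⟩ − ⟨ψ,Aψ⟩²)` in the pure state `ψ`. -/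
noncomputable def devPure (A : Matrix (Fin 2) (Fin 2) ℂ) (ψ : EuclideanSpace ℂ (Fin 2)) : ℝ :=
  Real.sqrt (expVal (A * A) ψ - (expVal A ψ) ^ 2)

/-- The 2×2 Gram matrix `T_{a,b}` of the Bloch vectors `a, b ∈ ℝ³`. -/
noncomputable def gram2 (a b : EuclideanSpace ℝ (Fin 3)) : Matrix (Fin 2) (Fin 2) ℝ :=
  !![inner ℝ a a, inner ℝ a b; inner ℝ b a, inner ℝ b b]

/-! The expectation of `a₀ • 1 + a • σ` in a unit state `ψ` is `a₀ + ⟪a, n⟫`, where `n` is the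
Bloch vector of `ψ`, a unit vector of `ℝ³`. Evaluated at `(⟪a, n⟫, ⟪b, n⟫)`, the quadratic form of
the inverse Gram matrix of `(a, b)` is the squared length of the orthogonal projection of `n` onto
`span {a, b}`, hence at most `‖n‖² = 1`; algebraically this is the nonnegativity of the Gram
determinant of `(a, b, n)`. -/

open scoped InnerProductSpace

-- No invertibility hypothesis: for a singular matrix both sides are junk zeros.
theorem dotProduct_inv_mulVec_fin_two {K : Type*} [Field K] (p q s r u v : K) :
    ![u, v] ⬝ᵥ (!![p, q; s, r])⁻¹.mulVec ![u, v] =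
      (r * u ^ 2 - (q + s) * u * v + p * v ^ 2) / (p * r - q * s) := by
  rw [Matrix.inv_def, adjugate_fin_two_of, det_fin_two_of, Ring.inverse_eq_inv]
  simp only [dotProduct, mulVec, Fin.sum_univ_two, Matrix.smul_apply, of_apply, cons_val_zero,
    cons_val_one, cons_val_fin_one, smul_eq_mul]
  ring

section InnerProductSpace

variable {E : Type*} [NormedAddCommGroup E] [InnerProductSpace ℝ E]

theorem inner_quadratic_le_norm_sq_mul_gram_det (a b n : E) :
    ⟪b, b⟫_ℝ * ⟪a, n⟫_ℝ ^ 2 - (⟪a, b⟫_ℝ + ⟪b, a⟫_ℝ) * ⟪a, n⟫_ℝ * ⟪b, n⟫_ℝ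
        + ⟪a, a⟫_ℝ * ⟪b, n⟫_ℝ ^ 2 ≤
      ‖n‖ ^ 2 * (⟪a, a⟫_ℝ * ⟪b, b⟫_ℝ - ⟪a, b⟫_ℝ * ⟪b, a⟫_ℝ) := by
  have h := (posSemidef_gram ℝ ![a, b, n]).det_nonneg
  simp only [det_fin_three, gram_apply, cons_val_zero, cons_val_one, cons_val_two,
    Nat.succ_eq_add_one, Nat.reduceAdd, tail_cons, head_cons, real_inner_comm a n,
    real_inner_comm b n] at h
  rw [← real_inner_self_eq_norm_sq]
  linarith

theorem dotProduct_inv_gram_mulVec_le (a b n : E) :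
    ![⟪a, n⟫_ℝ, ⟪b, n⟫_ℝ] ⬝ᵥ
        (!![⟪a, a⟫_ℝ, ⟪a, b⟫_ℝ; ⟪b, a⟫_ℝ, ⟪b, b⟫_ℝ])⁻¹.mulVec ![⟪a, n⟫_ℝ, ⟪b, n⟫_ℝ] ≤
      ‖n‖ ^ 2 := by
  have gram_det_nonneg : 0 ≤ ⟪a, a⟫_ℝ * ⟪b, b⟫_ℝ - ⟪a, b⟫_ℝ * ⟪b, a⟫_ℝ := by
    rw [real_inner_comm a b]
    exact sub_nonneg.mpr (real_inner_mul_inner_self_le a b)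
  rw [dotProduct_inv_mulVec_fin_two]
  exact div_le_of_le_mul₀ gram_det_nonneg (sq_nonneg _)
    (inner_quadratic_le_norm_sq_mul_gram_det a b n)

end InnerProductSpace

section Qubit

variable (ψ : EuclideanSpace ℂ (Fin 2))

theorem expVal_add (A B : Matrix (Fin 2) (Fin 2) ℂ) :
    expVal (A + B) ψ = expVal A ψ + expVal B ψ := by
  simp only [expVal, add_mulVec, dotProduct_add, Complex.add_re]

theorem expVal_smul (c : ℝ) (A : Matrix (Fin 2) (Fin 2) ℂ) :
    expVal (c • A) ψ = c * expVal A ψ := by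
  simp only [expVal, smul_mulVec, dotProduct_smul, Complex.real_smul, Complex.re_ofReal_mul]

theorem expVal_one : expVal 1 ψ = ‖ψ‖ ^ 2 := by
  simp [expVal, EuclideanSpace.norm_sq_eq, Fin.sum_univ_two, Complex.sq_norm,
    Complex.normSq_apply]

noncomputable def blochVector : EuclideanSpace ℝ (Fin 3) :=
  !₂[expVal sigma1 ψ, expVal sigma2 ψ, expVal sigma3 ψ]

theorem expVal_qubitObs (a₀ : ℝ) (a : EuclideanSpace ℝ (Fin 3)) :
    expVal (qubitObs a₀ a) ψ = a₀ * ‖ψ‖ ^ 2 + ⟪a, blochVector ψ⟫_ℝ := by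
  simp only [qubitObs, expVal_add, expVal_smul, expVal_one, blochVector, PiLp.inner_apply,
    RCLike.inner_apply, conj_trivial, Fin.sum_univ_three, cons_val_zero, cons_val_one, cons_val]
  ring

-- With `z = conj ψ₀ ψ₁`, this is `(2 Re z)² + (2 Im z)² + (|ψ₀|² - |ψ₁|²)² = (|ψ₀|² + |ψ₁|²)²`.
theorem norm_blochVector : ‖blochVector ψ‖ = ‖ψ‖ ^ 2 := by
  rw [← sq_eq_sq₀ (norm_nonneg _) (by positivity), EuclideanSpace.norm_sq_eq,
    EuclideanSpace.norm_sq_eq]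
  simp [blochVector, expVal, sigma1, sigma2, sigma3, dotProduct, mulVec, Fin.sum_univ_two,
    Fin.sum_univ_three, Complex.sq_norm, Complex.normSq_apply]
  ring

end Qubit

theorem stmt_9_general (a₀ b₀ : ℝ) (a b : EuclideanSpace ℝ (Fin 3)) :
    ∀ ψ : EuclideanSpace ℂ (Fin 2), ‖ψ‖ = 1 →
      ![expVal (qubitObs a₀ a) ψ - a₀, expVal (qubitObs b₀ b) ψ - b₀] ⬝ᵥ
          (gram2 a b)⁻¹.mulVec
            ![expVal (qubitObs a₀ a) ψ - a₀, expVal (qubitObs b₀ b) ψ - b₀] ≤ 1 := by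
  intro ψ hψ
  simp only [expVal_qubitObs, hψ, one_pow, mul_one, add_sub_cancel_left]
  calc _ ≤ ‖blochVector ψ‖ ^ 2 := dotProduct_inv_gram_mulVec_le a b (blochVector ψ)
    _ = 1 := by rw [norm_blochVector, hψ, one_pow, one_pow]

/-- For qubit observables `A = a₀·I + a·σ`, `B = b₀·I + b·σ` with linearly
independent Bloch vectors `a, b`, every unit vector `ψ ∈ ℂ²` satisfies
`(⟨A⟩_ψ − a₀, ⟨B⟩_ψ − b₀) T_{a,b}⁻¹ (⟨A⟩_ψ − a₀, ⟨B⟩_ψ − b₀)ᵀ ≤ 1`, i.e. the pair of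
expectation values lies in the closed ellipse `{ω_{A,B} ≤ 1}`. -/
theorem stmt_9 (a₀ b₀ : ℝ) (a b : EuclideanSpace ℝ (Fin 3))
    (hab : LinearIndependent ℝ ![a, b]) :
    ∀ ψ : EuclideanSpace ℂ (Fin 2), ‖ψ‖ = 1 →
      ![expVal (qubitObs a₀ a) ψ - a₀, expVal (qubitObs b₀ b) ψ - b₀] ⬝ᵥ
          (gram2 a b)⁻¹.mulVec
            ![expVal (qubitObs a₀ a) ψ - a₀, expVal (qubitObs b₀ b) ψ - b₀] ≤ 1 :=
  stmt_9_general a₀ b₀ a b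
end

section
/- Let A and B be 2×2 Hermitian complex matrices (qubit observables). Then the pure-state uncertainty region equals the mixed-state uncertainty region: {(Δ_ψA, Δ_ψB) : ψ ∈ ℂ² a unit vector} = {(Δ_ρA, Δ_ρB) : ρ a density matrix on ℂ²}. -/
open Matrix
open scoped ComplexOrder

/-- Standard deviation `Δ_ρ A = √(Tr(A²ρ) − (Tr(Aρ))²)` in the mixed state `ρ`. -/
noncomputable def devMix (A ρ : Matrix (Fin 2) (Fin 2) ℂ) : ℝ :=
  Real.sqrt (((A * A * ρ).trace).re - (((A * ρ).trace).re) ^ 2)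

/-!
A unit vector `ψ` gives the density matrix `ψψ*` with the same moments. Conversely, for `2 × 2`
matrices Cayley–Hamilton gives `Tr(A²ρ) = Tr A · Tr(Aρ) − det A · Tr ρ`, so the standard
deviations in `ρ` only depend on `Tr ρ`, `Tr(Aρ)` and `Tr(Bρ)`. The traceless Hermitian matrices
form a real space of dimension three, so some nonzero traceless Hermitian `C` has
`Tr(AC) = Tr(BC) = 0`, and moving along `ρ + tC` changes none of these traces. Since
`det C < 0` and `det ρ ≥ 0`, the quadratic `t ↦ det(ρ + tC)` has a real root; at that root
`ρ + tC` is Hermitian with eigenvalues `1` and `0`, i.e. the projection onto a unit eigenvector.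
-/

namespace Matrix

section

variable {n : Type*} [Fintype n]

theorem star_dotProduct_mulVec_eq_trace_mul_vecMulVec (M : Matrix n n ℂ) (ψ : n → ℂ) :
    star ψ ⬝ᵥ M *ᵥ ψ = (M * vecMulVec ψ (star ψ)).trace := by
  rw [mul_vecMulVec, trace_vecMulVec, dotProduct_comm]

theorem trace_vecMulVec_self_star (ψ : EuclideanSpace ℂ n) :
    (vecMulVec ⇑ψ (star ⇑ψ)).trace = (‖ψ‖ ^ 2 : ℝ) := by
  rw [trace_vecMulVec, ← EuclideanSpace.inner_eq_star_dotProduct, inner_self_eq_norm_sq_to_K]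
  push_cast
  rfl

theorem IsHermitian.im_trace_mul {A B : Matrix n n ℂ} (hA : A.IsHermitian) (hB : B.IsHermitian) :
    (A * B).trace.im = 0 := by
  rw [← Complex.conj_eq_iff_im, ← Complex.star_def, ← trace_conjTranspose, conjTranspose_mul,
    hA.eq, hB.eq, trace_mul_comm]

theorem IsHermitian.eq_vecMulVec_of_eigenvalues_eq_single [DecidableEq n] {A : Matrix n n ℂ}
    (hA : A.IsHermitian) {k : n} (he : hA.eigenvalues = Pi.single k 1) :
    A = vecMulVec ⇑(hA.eigenvectorBasis k) (star ⇑(hA.eigenvectorBasis k)) := by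
  refine toEuclideanLin.injective <| hA.eigenvectorBasis.toBasis.ext fun j => ?_
  ext i
  simp only [toLpLin_apply, OrthonormalBasis.coe_toBasis, hA.mulVec_eigenvectorBasis, he,
    vecMulVec_mulVec, dotProduct_comm (star _), ← EuclideanSpace.inner_eq_star_dotProduct,
    OrthonormalBasis.inner_eq_ite]
  rcases eq_or_ne k j with rfl | hkj
  · simp
  · simp [hkj, hkj.symm]

end

theorem det_fin_two_add_smul {R : Type*} [CommRing R] (X Y : Matrix (Fin 2) (Fin 2) R) (t : R) :
    (X + t • Y).det = X.det + t * (X.trace * Y.trace - (X * Y).trace) + t ^ 2 * Y.det := by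
  simp only [det_fin_two, add_apply, smul_apply, smul_eq_mul, trace_fin_two, mul_apply,
    Fin.sum_univ_two]
  ring

theorem trace_mul_self_mul_fin_two {R : Type*} [CommRing R] (M C : Matrix (Fin 2) (Fin 2) R) :
    (M * M * C).trace = M.trace * (M * C).trace - M.det * C.trace := by
  simp only [trace_fin_two, mul_apply, Fin.sum_univ_two, det_fin_two]
  ring

theorem IsHermitian.exists_eq_vecMulVec_of_trace_eq_one_of_det_eq_zero
    {ρ : Matrix (Fin 2) (Fin 2) ℂ} (hρ : ρ.IsHermitian) (htr : ρ.trace = 1) (hdet : ρ.det = 0) :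
    ∃ ψ : EuclideanSpace ℂ (Fin 2), ‖ψ‖ = 1 ∧ ρ = vecMulVec ⇑ψ (star ⇑ψ) := by
  have hsum : hρ.eigenvalues 0 + hρ.eigenvalues 1 = 1 := by
    simpa [htr, Fin.sum_univ_two] using congrArg Complex.re hρ.trace_eq_sum_eigenvalues.symm
  have hprod : hρ.eigenvalues 0 * hρ.eigenvalues 1 = 0 := by
    simpa [hdet, Fin.prod_univ_two] using congrArg Complex.re hρ.det_eq_prod_eigenvalues.symm
  obtain ⟨k, hk⟩ : ∃ k, hρ.eigenvalues = Pi.single k 1 := by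
    rcases mul_eq_zero.mp hprod with h | h
    · exact ⟨1, funext fun i => by fin_cases i <;> simp [h]; linarith⟩
    · exact ⟨0, funext fun i => by fin_cases i <;> simp [h]; linarith⟩
  exact ⟨_, hρ.eigenvectorBasis.orthonormal.1 k, hρ.eq_vecMulVec_of_eigenvalues_eq_single hk⟩

end Matrix

theorem exists_ne_zero_apply_eq_zero_of_two_lt_finrank {K V : Type*} [Field K] [AddCommGroup V]
    [Module K V] [FiniteDimensional K V] (hV : 2 < Module.finrank K V) (f g : V →ₗ[K] K) :
    ∃ v ≠ 0, f v = 0 ∧ g v = 0 := by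
  obtain ⟨v, hv, hv0⟩ := (Submodule.ne_bot_iff _).mp
    (LinearMap.ker_ne_bot_of_finrank_lt (f := f.prod g) (by simpa using hV))
  exact ⟨v, hv0, congrArg Prod.fst hv, congrArg Prod.snd hv⟩

noncomputable def pauli : (Fin 3 → ℝ) →ₗ[ℝ] Matrix (Fin 2) (Fin 2) ℂ where
  toFun v := !![(v 2 : ℂ), v 0 - v 1 * Complex.I; v 0 + v 1 * Complex.I, -v 2]
  map_add' v w := by ext i j; fin_cases i <;> fin_cases j <;> simp <;> ring
  map_smul' c v := by ext i j; fin_cases i <;> fin_cases j <;> simp <;> ring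

theorem pauli_isHermitian (v : Fin 3 → ℝ) : (pauli v).IsHermitian := by
  ext i j
  fin_cases i <;> fin_cases j <;> simp [pauli, Complex.ext_iff]

theorem trace_pauli (v : Fin 3 → ℝ) : (pauli v).trace = 0 := by
  simp [pauli, trace_fin_two]

theorem det_pauli (v : Fin 3 → ℝ) : (pauli v).det = -(v ⬝ᵥ v : ℝ) := by
  simp only [pauli, LinearMap.coe_mk, AddHom.coe_mk, det_fin_two_of, dotProduct,
    Fin.sum_univ_three]
  push_cast
  linear_combination (v 1 : ℂ) ^ 2 * Complex.I_sq

theorem exists_ne_zero_trace_mul_pauli_eq_zero {A B : Matrix (Fin 2) (Fin 2) ℂ}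
    (hA : A.IsHermitian) (hB : B.IsHermitian) :
    ∃ v ≠ 0, (A * pauli v).trace = 0 ∧ (B * pauli v).trace = 0 := by
  let φ (M : Matrix (Fin 2) (Fin 2) ℂ) : (Fin 3 → ℝ) →ₗ[ℝ] ℝ :=
    Complex.reLm ∘ₗ traceLinearMap (Fin 2) ℝ ℂ ∘ₗ LinearMap.mulLeft ℝ M ∘ₗ pauli
  obtain ⟨v, hv, hAv, hBv⟩ := exists_ne_zero_apply_eq_zero_of_two_lt_finrank (by simp) (φ A) (φ B)
  have hreal {M : Matrix (Fin 2) (Fin 2) ℂ} (hM : M.IsHermitian) (h : φ M v = 0) :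
      (M * pauli v).trace = 0 :=
    Complex.ext h (hM.im_trace_mul (pauli_isHermitian v))
  exact ⟨v, hv, hreal hA hAv, hreal hB hBv⟩

theorem exists_det_add_smul_pauli_eq_zero {ρ : Matrix (Fin 2) (Fin 2) ℂ} (hρ : ρ.PosSemidef)
    {v : Fin 3 → ℝ} (hv : v ≠ 0) : ∃ t : ℝ, (ρ + (t : ℂ) • pauli v).det = 0 := by
  obtain ⟨hdet_re, hdet_im⟩ := Complex.nonneg_iff.mp hρ.det_nonneg
  have hN : 0 < v ⬝ᵥ v := by simpa using dotProduct_self_star_pos_iff.mpr hv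
  set b := (ρ * pauli v).trace.re
  obtain ⟨t, ht⟩ := exists_quadratic_eq_zero (c := -ρ.det.re) (b := b) hN.ne'
    ⟨√(discrim (v ⬝ᵥ v) b (-ρ.det.re)), (Real.mul_self_sqrt (by unfold discrim; nlinarith)).symm⟩
  have hdet : ρ.det = (ρ.det.re : ℂ) := Complex.ext rfl (by simp [← hdet_im])
  have hb : (ρ * pauli v).trace = (b : ℂ) :=
    Complex.ext rfl (by simp [hρ.1.im_trace_mul (pauli_isHermitian v)])
  refine ⟨t, ?_⟩
  rw [det_fin_two_add_smul, trace_pauli, det_pauli, hdet, hb]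
  have htC := congrArg ((↑) : ℝ → ℂ) ht
  push_cast at htC
  linear_combination -htC

theorem expVal_eq_re_trace (M : Matrix (Fin 2) (Fin 2) ℂ) (ψ : EuclideanSpace ℂ (Fin 2)) :
    expVal M ψ = (M * vecMulVec ⇑ψ (star ⇑ψ)).trace.re :=
  congrArg Complex.re (star_dotProduct_mulVec_eq_trace_mul_vecMulVec M ψ)

theorem devPure_eq_devMix_vecMulVec (M : Matrix (Fin 2) (Fin 2) ℂ) (ψ : EuclideanSpace ℂ (Fin 2)) :
    devPure M ψ = devMix M (vecMulVec ⇑ψ (star ⇑ψ)) := by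
  simp only [devPure, devMix, expVal_eq_re_trace]

theorem devMix_add_smul (A ρ C : Matrix (Fin 2) (Fin 2) ℂ) (t : ℂ) (hC : C.trace = 0)
    (hAC : (A * C).trace = 0) : devMix A (ρ + t • C) = devMix A ρ := by
  have hAAC : (A * A * C).trace = 0 := by rw [trace_mul_self_mul_fin_two, hAC, hC]; ring
  simp only [devMix, Matrix.mul_add, Matrix.mul_smul, trace_add, trace_smul, hAC, hAAC, smul_zero,
    add_zero]

theorem exists_devPure_eq_devMix {A B ρ : Matrix (Fin 2) (Fin 2) ℂ} (hA : A.IsHermitian)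
    (hB : B.IsHermitian) (hρ : ρ.PosSemidef) (htr : ρ.trace = 1) :
    ∃ ψ : EuclideanSpace ℂ (Fin 2), ‖ψ‖ = 1 ∧ devPure A ψ = devMix A ρ ∧
      devPure B ψ = devMix B ρ := by
  obtain ⟨v, hv, hAv, hBv⟩ := exists_ne_zero_trace_mul_pauli_eq_zero hA hB
  obtain ⟨t, hdet⟩ := exists_det_add_smul_pauli_eq_zero hρ hv
  have hherm : (ρ + (t : ℂ) • pauli v).IsHermitian :=
    hρ.1.add ((pauli_isHermitian v).smul (Complex.conj_ofReal t))
  have htr' : (ρ + (t : ℂ) • pauli v).trace = 1 := by simp [trace_pauli, htr]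
  obtain ⟨ψ, hψ, hρψ⟩ := hherm.exists_eq_vecMulVec_of_trace_eq_one_of_det_eq_zero htr' hdet
  refine ⟨ψ, hψ, ?_, ?_⟩
  · rw [devPure_eq_devMix_vecMulVec, ← hρψ, devMix_add_smul _ _ _ _ (trace_pauli v) hAv]
  · rw [devPure_eq_devMix_vecMulVec, ← hρψ, devMix_add_smul _ _ _ _ (trace_pauli v) hBv]

/-- For qubit observables (2×2 Hermitian matrices) `A`, `B`, the pure-state
uncertainty region `{(Δ_ψA, Δ_ψB) : ψ a unit vector}` coincides with the mixed-state
uncertainty region `{(Δ_ρA, Δ_ρB) : ρ a density matrix}`. -/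
theorem stmt_19 (A B : Matrix (Fin 2) (Fin 2) ℂ)
    (hA : A.IsHermitian) (hB : B.IsHermitian) :
    {q : ℝ × ℝ | ∃ ψ : EuclideanSpace ℂ (Fin 2), ‖ψ‖ = 1 ∧
        q = (devPure A ψ, devPure B ψ)}
      = {q : ℝ × ℝ | ∃ ρ : Matrix (Fin 2) (Fin 2) ℂ,
          ρ.PosSemidef ∧ ρ.trace = 1 ∧ q = (devMix A ρ, devMix B ρ)} := by
  ext q
  constructor
  · rintro ⟨ψ, hψ, rfl⟩
    refine ⟨_, posSemidef_vecMulVec_self_star ⇑ψ, ?_, ?_⟩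
    · rw [trace_vecMulVec_self_star, hψ]; simp
    · simp only [devPure_eq_devMix_vecMulVec]
  · rintro ⟨ρ, hρ, htr, rfl⟩
    obtain ⟨ψ, hψ, hAψ, hBψ⟩ := exists_devPure_eq_devMix hA hB hρ htr
    exact ⟨ψ, hψ, by rw [hAψ, hBψ]⟩
end
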